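/- Let N⁰ be a probability measure on ℝ with Stieltjes transform f⁰, σ a probability measure on ℝ, and c ≥ 0. Then there is at most one probability measure N whose Stieltjes transform f (analytic on ℂ∖ℝ with Im f(z)·Im z ≥ 0) satisfies f(z) = f⁰(z − c ∫ τ σ(dτ)/(1 + τ f(z))) for all Im z ≠ 0. -/

import Mathlib

/-!
Fix `Im z > 0` and put `w(f) = z − c ∫ τ σ(dτ)/(1 + τ f)`. Taking imaginary parts in `f = f⁰(w(f))`
gives `Im f = B (Im z + c Q Im f)` with `Q = ∫ |τ/(1 + τ f)|² dσ` and `B = ∫ |t − w(f)|⁻² dN⁰`, so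
`c Q B < 1`. For two solutions `f, g` the resolvent identities give `f − g = (f − g) · c E D`, and
Cauchy–Schwarz bounds `|c E D|²` by `(c Q_f B_f)(c Q_g B_g) < 1`; hence `f = g`, i.e. the Stieltjes
transforms of `N` and `N'` agree on the upper half-plane. Finally `π⁻¹ Im f_μ(x + iγ)` is the
density of `μ` convolved with the Cauchy law of scale `γ`, which tends weakly to `μ` as `γ → 0`.
-/

open MeasureTheory

/-- The Stieltjes transform `f_μ(z) = ∫ μ(dλ)/(λ − z)` of a measure on `ℝ`. -/
noncomputable def stieltjesT (μ : Measure ℝ) (z : ℂ) : ℂ :=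
  ∫ t, 1 / ((t : ℂ) - z) ∂μ

open Complex

theorem sq_norm_integral_mul_le {α 𝕜 : Type*} [MeasurableSpace α] [RCLike 𝕜] {μ : Measure α}
    {u v : α → 𝕜} (hu : MemLp u 2 μ) (hv : MemLp v 2 μ) :
    ‖∫ a, u a * v a ∂μ‖ ^ 2 ≤ (∫ a, ‖u a‖ ^ 2 ∂μ) * ∫ a, ‖v a‖ ^ 2 ∂μ := by
  have holder := integral_mul_norm_le_Lp_mul_Lq (f := u) (g := v) Real.HolderConjugate.two_two
    (by simpa using hu) (by simpa using hv)
  simp only [Real.rpow_two, ← Real.sqrt_eq_rpow] at holder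
  calc ‖∫ a, u a * v a ∂μ‖ ^ 2 ≤ (∫ a, ‖u a‖ * ‖v a‖ ∂μ) ^ 2 := by
        gcongr
        simpa only [norm_mul] using norm_integral_le_integral_norm (fun a => u a * v a)
    _ ≤ (√(∫ a, ‖u a‖ ^ 2 ∂μ) * √(∫ a, ‖v a‖ ^ 2 ∂μ)) ^ 2 := by
        gcongr
    _ = (∫ a, ‖u a‖ ^ 2 ∂μ) * ∫ a, ‖v a‖ ^ 2 ∂μ := by
        rw [mul_pow, Real.sq_sqrt (by positivity), Real.sq_sqrt (by positivity)]

section Kernels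

variable {t τ : ℝ} {z w f g : ℂ}

theorem ofReal_sub_ne_zero_of_im_ne_zero (hz : z.im ≠ 0) : (t : ℂ) - z ≠ 0 := by
  intro h
  exact hz (by simpa using (congrArg Complex.im h).symm)

theorem norm_one_div_ofReal_sub_le (hz : z.im ≠ 0) : ‖1 / ((t : ℂ) - z)‖ ≤ |z.im|⁻¹ := by
  rw [norm_div, norm_one, one_div]
  refine inv_anti₀ (abs_pos.mpr hz) ?_
  simpa using abs_im_le_norm ((t : ℂ) - z)

theorem im_one_div_ofReal_sub : (1 / ((t : ℂ) - z)).im = ‖1 / ((t : ℂ) - z)‖ ^ 2 * z.im := by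
  rw [one_div, inv_im, norm_inv, inv_pow, Complex.sq_norm, sub_im, ofReal_im, zero_sub, neg_neg,
    div_eq_inv_mul]

theorem one_div_ofReal_sub_sub_one_div_ofReal_sub (hz : z.im ≠ 0) (hw : w.im ≠ 0) :
    1 / ((t : ℂ) - z) - 1 / ((t : ℂ) - w) =
      (z - w) * (1 / ((t : ℂ) - z) * (1 / ((t : ℂ) - w))) := by
  have := ofReal_sub_ne_zero_of_im_ne_zero (t := t) hz
  have := ofReal_sub_ne_zero_of_im_ne_zero (t := t) hw
  field_simp
  ring

theorem one_add_ofReal_mul_ne_zero (hf : f.im ≠ 0) : 1 + (τ : ℂ) * f ≠ 0 := by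
  intro h
  have him : τ * f.im = 0 := by simpa using congrArg Complex.im h
  obtain rfl : τ = 0 := (mul_eq_zero.mp him).resolve_right hf
  simp at h

theorem norm_ofReal_div_one_add_mul_le (hf : f.im ≠ 0) :
    ‖(τ : ℂ) / (1 + τ * f)‖ ≤ |f.im|⁻¹ := by
  rw [norm_div, norm_real, Real.norm_eq_abs]
  refine div_le_of_le_mul₀ (norm_nonneg _) (by positivity) ?_
  rw [inv_mul_eq_div, le_div_iff₀ (abs_pos.mpr hf), ← abs_mul]
  simpa using abs_im_le_norm (1 + (τ : ℂ) * f)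

theorem im_ofReal_div_one_add_mul :
    ((τ : ℂ) / (1 + τ * f)).im = -(‖(τ : ℂ) / (1 + τ * f)‖ ^ 2 * f.im) := by
  rw [div_eq_mul_inv, im_ofReal_mul, inv_im, norm_mul, norm_inv, mul_pow, inv_pow, norm_real,
    Real.norm_eq_abs, sq_abs, Complex.sq_norm, add_im, one_im, zero_add, im_ofReal_mul]
  ring

theorem ofReal_div_one_add_mul_sub_ofReal_div_one_add_mul (hf : f.im ≠ 0) (hg : g.im ≠ 0) :
    (τ : ℂ) / (1 + τ * f) - τ / (1 + τ * g) =
      (g - f) * ((τ / (1 + τ * f)) * (τ / (1 + τ * g))) := by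
  have := one_add_ofReal_mul_ne_zero (τ := τ) hf
  have := one_add_ofReal_mul_ne_zero (τ := τ) hg
  field_simp
  ring

end Kernels

theorem integral_pos_of_forall_pos {α : Type*} [MeasurableSpace α] {μ : Measure α} [NeZero μ]
    {u : α → ℝ} (hu : Integrable u μ) (hpos : ∀ a, 0 < u a) : 0 < ∫ a, u a ∂μ := by
  rw [integral_pos_iff_support_of_nonneg (fun a => (hpos a).le) hu,
    Function.support_eq_univ fun a => (hpos a).ne']
  exact Measure.measure_univ_pos.mpr (NeZero.ne μ)

section Integrals

open scoped ENNReal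

variable {μ : Measure ℝ} [IsFiniteMeasure μ] {z w f g : ℂ}

theorem memLp_one_div_ofReal_sub (hz : z.im ≠ 0) (p : ℝ≥0∞) :
    MemLp (fun t : ℝ => 1 / ((t : ℂ) - z)) p μ :=
  (memLp_top_of_bound (Measurable.aestronglyMeasurable (by fun_prop)) _
    (ae_of_all _ fun _ => norm_one_div_ofReal_sub_le hz)).mono_exponent le_top

theorem memLp_ofReal_div_one_add_mul (hf : f.im ≠ 0) (p : ℝ≥0∞) :
    MemLp (fun τ : ℝ => (τ : ℂ) / (1 + τ * f)) p μ :=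
  (memLp_top_of_bound (Measurable.aestronglyMeasurable (by fun_prop)) _
    (ae_of_all _ fun _ => norm_ofReal_div_one_add_mul_le hf)).mono_exponent le_top

theorem integrable_one_div_ofReal_sub (hz : z.im ≠ 0) :
    Integrable (fun t : ℝ => 1 / ((t : ℂ) - z)) μ :=
  memLp_one_iff_integrable.mp (memLp_one_div_ofReal_sub hz 1)

theorem integrable_ofReal_div_one_add_mul (hf : f.im ≠ 0) :
    Integrable (fun τ : ℝ => (τ : ℂ) / (1 + τ * f)) μ :=
  memLp_one_iff_integrable.mp (memLp_ofReal_div_one_add_mul hf 1)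

theorem stieltjesT_im (hz : z.im ≠ 0) :
    (stieltjesT μ z).im = (∫ t, ‖1 / ((t : ℂ) - z)‖ ^ 2 ∂μ) * z.im := by
  rw [stieltjesT, ← integral_mul_const]
  simp_rw [← im_one_div_ofReal_sub]
  exact (integral_im (integrable_one_div_ofReal_sub hz)).symm

theorem stieltjesT_im_pos [NeZero μ] (hz : 0 < z.im) : 0 < (stieltjesT μ z).im := by
  rw [stieltjesT_im hz.ne']
  refine mul_pos (integral_pos_of_forall_pos ?_ fun t => ?_) hz
  · exact (memLp_one_div_ofReal_sub hz.ne' 2).integrable_norm_pow two_ne_zero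
  · simpa using pow_pos (norm_pos_iff.mpr (ofReal_sub_ne_zero_of_im_ne_zero (t := t) hz.ne')) 2

theorem integral_ofReal_div_one_add_mul_im (hf : f.im ≠ 0) :
    (∫ τ, (τ : ℂ) / (1 + τ * f) ∂μ).im = -((∫ τ, ‖(τ : ℂ) / (1 + τ * f)‖ ^ 2 ∂μ) * f.im) := by
  rw [← integral_mul_const, ← integral_neg]
  simp_rw [← im_ofReal_div_one_add_mul]
  exact (integral_im (integrable_ofReal_div_one_add_mul hf)).symm

theorem stieltjesT_sub_stieltjesT (hz : z.im ≠ 0) (hw : w.im ≠ 0) :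
    stieltjesT μ z - stieltjesT μ w =
      (z - w) * ∫ t, 1 / ((t : ℂ) - z) * (1 / ((t : ℂ) - w)) ∂μ := by
  rw [stieltjesT, stieltjesT, ← integral_sub (integrable_one_div_ofReal_sub hz)
    (integrable_one_div_ofReal_sub hw), ← integral_const_mul]
  simp_rw [one_div_ofReal_sub_sub_one_div_ofReal_sub hz hw]

theorem integral_ofReal_div_one_add_mul_sub (hf : f.im ≠ 0) (hg : g.im ≠ 0) :
    ∫ τ, (τ : ℂ) / (1 + τ * f) ∂μ - ∫ τ, (τ : ℂ) / (1 + τ * g) ∂μ =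
      (g - f) * ∫ τ, (τ : ℂ) / (1 + τ * f) * (τ / (1 + τ * g)) ∂μ := by
  rw [← integral_sub (integrable_ofReal_div_one_add_mul hf) (integrable_ofReal_div_one_add_mul hg),
    ← integral_const_mul]
  simp_rw [ofReal_div_one_add_mul_sub_ofReal_div_one_add_mul hf hg]

end Integrals

noncomputable def marchenkoPasturArg (σ : Measure ℝ) (c : ℝ) (z f : ℂ) : ℂ :=
  z - c * ∫ τ, (τ : ℂ) / (1 + τ * f) ∂σ

section SelfConsistent

variable {N0 σ : Measure ℝ} [IsFiniteMeasure N0] [IsFiniteMeasure σ] {c : ℝ} {z f g : ℂ}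

theorem marchenkoPasturArg_im (hf : f.im ≠ 0) :
    (marchenkoPasturArg σ c z f).im = z.im + c * (∫ τ, ‖(τ : ℂ) / (1 + τ * f)‖ ^ 2 ∂σ) * f.im := by
  rw [marchenkoPasturArg, sub_im, im_ofReal_mul, integral_ofReal_div_one_add_mul_im hf]
  ring

theorem marchenkoPasturArg_im_pos (hc : 0 ≤ c) (hz : 0 < z.im) (hf : 0 < f.im) :
    0 < (marchenkoPasturArg σ c z f).im := by
  rw [marchenkoPasturArg_im hf.ne']
  have : 0 ≤ ∫ τ, ‖(τ : ℂ) / (1 + τ * f)‖ ^ 2 ∂σ := integral_nonneg fun _ => by positivity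
  positivity

theorem marchenkoPasturArg_sub (hf : f.im ≠ 0) (hg : g.im ≠ 0) :
    marchenkoPasturArg σ c z f - marchenkoPasturArg σ c z g =
      (f - g) * (c * ∫ τ, (τ : ℂ) / (1 + τ * f) * (τ / (1 + τ * g)) ∂σ) := by
  simp only [marchenkoPasturArg]
  linear_combination (-(c : ℂ)) * integral_ofReal_div_one_add_mul_sub (μ := σ) hf hg

theorem mul_integral_mul_integral_lt_one_of_eq_stieltjesT (hc : 0 ≤ c) (hz : 0 < z.im)
    (hf : 0 < f.im) (hsol : f = stieltjesT N0 (marchenkoPasturArg σ c z f)) :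
    c * (∫ τ, ‖(τ : ℂ) / (1 + τ * f)‖ ^ 2 ∂σ) *
      ∫ t, ‖1 / ((t : ℂ) - marchenkoPasturArg σ c z f)‖ ^ 2 ∂N0 < 1 := by
  have hfB := stieltjesT_im (μ := N0) (marchenkoPasturArg_im_pos (σ := σ) hc hz hf).ne'
  rw [← hsol, marchenkoPasturArg_im hf.ne'] at hfB
  have hB : 0 ≤ ∫ t, ‖1 / ((t : ℂ) - marchenkoPasturArg σ c z f)‖ ^ 2 ∂N0 :=
    integral_nonneg fun _ => by positivity
  generalize ∫ τ, ‖(τ : ℂ) / (1 + τ * f)‖ ^ 2 ∂σ = Q at hfB ⊢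
  generalize ∫ t, ‖1 / ((t : ℂ) - marchenkoPasturArg σ c z f)‖ ^ 2 ∂N0 = B at hB hfB ⊢
  have hB_pos : 0 < B := hB.lt_of_ne fun hB0 => hf.ne' (by rw [hfB, ← hB0, zero_mul])
  by_contra! h
  nlinarith [mul_pos hB_pos hz]

theorem eq_of_eq_stieltjesT_marchenkoPasturArg (hc : 0 ≤ c) (hz : 0 < z.im)
    (hf : 0 < f.im) (hg : 0 < g.im)
    (hfsol : f = stieltjesT N0 (marchenkoPasturArg σ c z f))
    (hgsol : g = stieltjesT N0 (marchenkoPasturArg σ c z g)) : f = g := by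
  have hcf := mul_integral_mul_integral_lt_one_of_eq_stieltjesT hc hz hf hfsol
  have hcg := mul_integral_mul_integral_lt_one_of_eq_stieltjesT hc hz hg hgsol
  have hw : 0 < (marchenkoPasturArg σ c z f).im := marchenkoPasturArg_im_pos hc hz hf
  have hw' : 0 < (marchenkoPasturArg σ c z g).im := marchenkoPasturArg_im_pos hc hz hg
  set w := marchenkoPasturArg σ c z f
  set w' := marchenkoPasturArg σ c z g
  set Qf := ∫ τ, ‖(τ : ℂ) / (1 + τ * f)‖ ^ 2 ∂σ
  set Qg := ∫ τ, ‖(τ : ℂ) / (1 + τ * g)‖ ^ 2 ∂σ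
  set Bf := ∫ t, ‖1 / ((t : ℂ) - w)‖ ^ 2 ∂N0
  set Bg := ∫ t, ‖1 / ((t : ℂ) - w')‖ ^ 2 ∂N0
  set E := ∫ τ, (τ : ℂ) / (1 + τ * f) * (τ / (1 + τ * g)) ∂σ
  set D := ∫ t, 1 / ((t : ℂ) - w) * (1 / ((t : ℂ) - w')) ∂N0
  have hfg : f - g = (f - g) * (c * E * D) := by
    calc f - g = (w - w') * D := by
          rw [← stieltjesT_sub_stieltjesT hw.ne' hw'.ne', ← hfsol, ← hgsol]
      _ = (f - g) * (c * E * D) := by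
          rw [marchenkoPasturArg_sub hf.ne' hg.ne']
          ring
  have hE : ‖E‖ ^ 2 ≤ Qf * Qg :=
    sq_norm_integral_mul_le (memLp_ofReal_div_one_add_mul hf.ne' 2)
      (memLp_ofReal_div_one_add_mul hg.ne' 2)
  have hD : ‖D‖ ^ 2 ≤ Bf * Bg :=
    sq_norm_integral_mul_le (memLp_one_div_ofReal_sub hw.ne' 2) (memLp_one_div_ofReal_sub hw'.ne' 2)
  have hQf : 0 ≤ Qf := integral_nonneg fun _ => by positivity
  have hBf : 0 ≤ Bf := integral_nonneg fun _ => by positivity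
  by_contra hne
  have hK : c * E * D = 1 := (mul_eq_left₀ (sub_ne_zero.mpr hne)).mp hfg.symm
  have h_one_le : 1 ≤ (c * Qf * Bf) * (c * Qg * Bg) :=
    calc 1 = c ^ 2 * ‖E‖ ^ 2 * ‖D‖ ^ 2 := by
          rw [← Real.norm_of_nonneg hc, ← norm_real, ← mul_pow, ← mul_pow, ← norm_mul, ← norm_mul,
            hK, norm_one, one_pow]
      _ ≤ c ^ 2 * (Qf * Qg) * (Bf * Bg) := by gcongr
      _ = (c * Qf * Bf) * (c * Qg * Bg) := by ring
  nlinarith [mul_nonneg (mul_nonneg hc hQf) hBf]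

end SelfConsistent

section Inversion

open ProbabilityTheory Filter Topology BoundedContinuousFunction
open scoped NNReal Real

theorem stieltjesT_im_ofReal_add_mul_I (μ : Measure ℝ) [IsFiniteMeasure μ] (x : ℝ) {γ : ℝ≥0}
    (hγ : γ ≠ 0) : (stieltjesT μ (x + γ * I)).im = π * ∫ t, cauchyPDFReal t γ x ∂μ := by
  have hγ' : (0 : ℝ) < γ := NNReal.coe_pos.mpr (pos_iff_ne_zero.mpr hγ)
  rw [stieltjesT_im (by simpa using hγ'.ne'), ← integral_const_mul, ← integral_mul_const]
  congr 1 with t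
  rw [cauchyPDFReal_def, norm_div, norm_one, div_pow, Complex.sq_norm, normSq_apply]
  simp only [sub_re, ofReal_re, add_re, mul_re, I_re, I_im, sub_im, ofReal_im, add_im, mul_im,
    mul_zero, sub_zero, add_zero, mul_one, zero_add, zero_sub]
  rw [← mul_assoc π, ← mul_assoc π, mul_inv_cancel₀ Real.pi_ne_zero, one_mul]
  ring

theorem cauchyPDFReal_add_mul {γ : ℝ≥0} (hγ : γ ≠ 0) (t u : ℝ) :
    cauchyPDFReal t γ (t + γ * u) = (γ : ℝ)⁻¹ * cauchyPDFReal 0 1 u := by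
  rw [cauchyPDFReal_def', cauchyPDFReal_def']
  have : (γ : ℝ) ≠ 0 := by exact_mod_cast hγ
  simp only [NNReal.coe_inv, NNReal.coe_one, add_sub_cancel_left, sub_zero, div_one, inv_one,
    mul_one]
  field_simp

theorem integral_mul_cauchyPDFReal (g : ℝ → ℝ) {γ : ℝ≥0} (hγ : γ ≠ 0) (t : ℝ) :
    ∫ x, g x * cauchyPDFReal t γ x = ∫ u, g (t + γ * u) * cauchyPDFReal 0 1 u := by
  have hγ' : (0 : ℝ) < γ := NNReal.coe_pos.mpr (pos_iff_ne_zero.mpr hγ)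
  have h := Measure.integral_comp_mul_left (fun y => g (t + y) * cauchyPDFReal t γ (t + y)) γ
  rw [integral_add_left_eq_self (fun x => g x * cauchyPDFReal t γ x), abs_inv, abs_of_pos hγ',
    smul_eq_mul, eq_inv_mul_iff_mul_eq₀ hγ'.ne', ← integral_const_mul] at h
  rw [← h]
  congr 1 with u
  rw [cauchyPDFReal_add_mul hγ]
  field_simp

theorem norm_mul_cauchyPDFReal_le (φ : ℝ →ᵇ ℝ) {γ : ℝ≥0} (hγ : γ ≠ 0) (t x y : ℝ) :
    ‖φ y * cauchyPDFReal t γ x‖ ≤ ‖φ‖ * cauchyPDFReal t γ x := by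
  have hp := (cauchyPDF_pos t hγ x).le
  rw [norm_mul, Real.norm_of_nonneg hp]
  exact mul_le_mul_of_nonneg_right (φ.norm_coe_le_norm y) hp

theorem tendsto_integral_mul_cauchyPDFReal (φ : ℝ →ᵇ ℝ) (t : ℝ) :
    Tendsto (fun γ : ℝ≥0 => ∫ x, φ x * cauchyPDFReal t γ x) (𝓝[>] 0) (𝓝 (φ t)) := by
  have hlim : φ t = ∫ u, φ (t + (0 : ℝ≥0) * u) * cauchyPDFReal 0 1 u := by
    simp [integral_const_mul, integral_cauchyPDFReal_eq_one]
  rw [hlim]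
  refine Tendsto.congr' (eventually_nhdsWithin_of_forall fun γ hγ =>
    (integral_mul_cauchyPDFReal φ (ne_of_gt hγ) t).symm) ?_
  refine tendsto_integral_filter_of_dominated_convergence (fun u => ‖φ‖ * cauchyPDFReal 0 1 u)
    (Eventually.of_forall fun _ => by fun_prop)
    (Eventually.of_forall fun _ => ae_of_all _ fun u =>
      norm_mul_cauchyPDFReal_le φ one_ne_zero 0 u _)
    ((integrable_cauchyPDFReal 0).const_mul _) (ae_of_all _ fun u => ?_)
  refine ((φ.continuous.tendsto _).comp ?_).mul_const _
  exact ((by fun_prop : Continuous fun γ : ℝ≥0 => t + γ * u).tendsto 0).mono_left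
    nhdsWithin_le_nhds

theorem integrable_mul_cauchyPDFReal (φ : ℝ →ᵇ ℝ) {γ : ℝ≥0} (hγ : γ ≠ 0) (t : ℝ) :
    Integrable fun x => φ x * cauchyPDFReal t γ x :=
  ((integrable_cauchyPDFReal t).const_mul ‖φ‖).mono'
    (φ.continuous.aestronglyMeasurable.mul (integrable_cauchyPDFReal t).aestronglyMeasurable)
    (ae_of_all _ fun x => norm_mul_cauchyPDFReal_le φ hγ t x x)

theorem norm_integral_mul_cauchyPDFReal_le (φ : ℝ →ᵇ ℝ) {γ : ℝ≥0} (hγ : γ ≠ 0) (t : ℝ) :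
    ‖∫ x, φ x * cauchyPDFReal t γ x‖ ≤ ‖φ‖ := by
  calc ‖∫ x, φ x * cauchyPDFReal t γ x‖ ≤ ∫ x, ‖φ‖ * cauchyPDFReal t γ x :=
        norm_integral_le_of_norm_le ((integrable_cauchyPDFReal t).const_mul ‖φ‖)
          (ae_of_all _ fun x => norm_mul_cauchyPDFReal_le φ hγ t x x)
    _ = ‖φ‖ := by rw [integral_const_mul, integral_cauchyPDFReal_eq_one t hγ, mul_one]

theorem integrable_prod_mul_cauchyPDFReal (μ : Measure ℝ) [IsFiniteMeasure μ] (φ : ℝ →ᵇ ℝ)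
    {γ : ℝ≥0} (hγ : γ ≠ 0) :
    Integrable (Function.uncurry fun t x => φ x * cauchyPDFReal t γ x) (μ.prod volume) := by
  have hm : AEStronglyMeasurable (Function.uncurry fun t x => φ x * cauchyPDFReal t γ x)
      (μ.prod volume) :=
    ((φ.continuous.measurable.comp measurable_snd).mul
      (by unfold cauchyPDFReal; fun_prop)).aestronglyMeasurable
  refine (integrable_prod_iff hm).mpr ⟨ae_of_all _ (integrable_mul_cauchyPDFReal φ hγ), ?_⟩
  refine Integrable.of_bound hm.norm.integral_prod_right' ‖φ‖ (ae_of_all _ fun t => ?_)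
  rw [Real.norm_of_nonneg (integral_nonneg fun _ => norm_nonneg _)]
  calc ∫ x, ‖φ x * cauchyPDFReal t γ x‖ ≤ ∫ x, ‖φ‖ * cauchyPDFReal t γ x :=
        integral_mono (integrable_mul_cauchyPDFReal φ hγ t).norm
          ((integrable_cauchyPDFReal t).const_mul ‖φ‖) fun x => norm_mul_cauchyPDFReal_le φ hγ t x x
    _ = ‖φ‖ := by rw [integral_const_mul, integral_cauchyPDFReal_eq_one t hγ, mul_one]

theorem tendsto_integral_integral_mul_cauchyPDFReal (μ : Measure ℝ) [IsFiniteMeasure μ]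
    (φ : ℝ →ᵇ ℝ) :
    Tendsto (fun γ : ℝ≥0 => ∫ t, (∫ x, φ x * cauchyPDFReal t γ x) ∂μ) (𝓝[>] 0)
      (𝓝 (∫ t, φ t ∂μ)) :=
  tendsto_integral_filter_of_dominated_convergence
    (F := fun γ t => ∫ x, φ x * cauchyPDFReal t γ x) (fun _ => ‖φ‖)
    (eventually_nhdsWithin_of_forall fun _ hγ =>
      (integrable_prod_mul_cauchyPDFReal μ φ (ne_of_gt hγ)).integral_prod_left.aestronglyMeasurable)
    (eventually_nhdsWithin_of_forall fun _ hγ =>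
      ae_of_all _ (norm_integral_mul_cauchyPDFReal_le φ (ne_of_gt hγ)))
    (integrable_const _) (ae_of_all _ (tendsto_integral_mul_cauchyPDFReal φ))

theorem ext_of_stieltjesT_eq {μ ν : Measure ℝ} [IsFiniteMeasure μ] [IsFiniteMeasure ν]
    (h : ∀ z : ℂ, 0 < z.im → stieltjesT μ z = stieltjesT ν z) : μ = ν := by
  refine ext_of_forall_integral_eq_of_IsFiniteMeasure fun φ => tendsto_nhds_unique
    ((tendsto_integral_integral_mul_cauchyPDFReal μ φ).congr' ?_)
    (tendsto_integral_integral_mul_cauchyPDFReal ν φ)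
  refine eventually_nhdsWithin_of_forall fun γ (hγ : 0 < γ) => ?_
  have hdensity : ∀ x : ℝ, ∫ t, cauchyPDFReal t γ x ∂μ = ∫ t, cauchyPDFReal t γ x ∂ν :=
    fun x => mul_left_cancel₀ Real.pi_ne_zero <| by
      rw [← stieltjesT_im_ofReal_add_mul_I μ x hγ.ne', ← stieltjesT_im_ofReal_add_mul_I ν x hγ.ne',
        h _ (by simpa using hγ)]
  dsimp only
  rw [integral_integral_swap (integrable_prod_mul_cauchyPDFReal μ φ hγ.ne'),
    integral_integral_swap (integrable_prod_mul_cauchyPDFReal ν φ hγ.ne')]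
  simp_rw [integral_const_mul, hdensity]

end Inversion

/-- There is at most one probability measure `N` whose Stieltjes transform satisfies
the Marchenko–Pastur self-consistent equation
`f(z) = f⁰(z − c ∫ τ σ(dτ)/(1 + τ f(z)))` for all `Im z ≠ 0`. -/
theorem self_consistent_equation_unique
    (N0 σ : Measure ℝ) [IsProbabilityMeasure N0] [IsProbabilityMeasure σ]
    (c : ℝ) (hc : 0 ≤ c)
    (N N' : Measure ℝ) [IsProbabilityMeasure N] [IsProbabilityMeasure N']
    (heq : ∀ z : ℂ, z.im ≠ 0 →
      stieltjesT N z =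
        stieltjesT N0 (z - c * ∫ τ, (τ : ℂ) / (1 + τ * stieltjesT N z) ∂σ))
    (heq' : ∀ z : ℂ, z.im ≠ 0 →
      stieltjesT N' z =
        stieltjesT N0 (z - c * ∫ τ, (τ : ℂ) / (1 + τ * stieltjesT N' z) ∂σ)) :
    N = N' :=
  ext_of_stieltjesT_eq fun _ hz =>
    eq_of_eq_stieltjesT_marchenkoPasturArg hc hz (stieltjesT_im_pos hz) (stieltjesT_im_pos hz)
      (heq _ hz.ne') (heq' _ hz.ne')
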